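/- Let (Γ, σ) be a measure space, M ≥ 1, ρ_1, …, ρ_M ∈ L²(Γ, σ) and ν ∈ ℝ^M with ν_i ∈ (0,1) for all i and Σ_{i=1}^M ν_i² = 1. Let T_ν : L²(Γ, σ) → ℝ^M be the bounded linear operator with (T_ν u)_i = ν_i ∫_Γ u ρ_i dσ, let Λ^ν ∈ ℝ^{M×M} have entries Λ^ν_{ij} = ν_i ν_j ∫_Γ ρ_i ρ_j dσ, let 𝐮_1, …, 𝐮_k ∈ ℝ^M be an orthonormal basis of (Ker Λ^ν)^⊥ consisting of eigenvectors of Λ^ν with eigenvalues λ_1 ≥ … ≥ λ_k > 0, and let u_j := λ_j^{-1/2} Σ_{i=1}^M ν_i (𝐮_j)_i ρ_i for j = 1, …, k. Fix r with 1 ≤ r ≤ k and a vector b^ν ∈ ℝ^M, and let P_r denote the orthogonal projection of L²(Γ, σ) onto span{u_1, …, u_r}. Define the r-truncated solution 𝐮^{(r)} := Σ_{i=1}^r λ_i^{-1} ⟨b^ν, 𝐮_i⟩ 𝐮_i ∈ ℝ^M. Then for every u ∈ L²(Γ, σ) satisfying T_ν* T_ν u = T_ν* b^ν, one has P_r u =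 Σ_{j=1}^M ν_j (𝐮^{(r)})_j ρ_j. -/

import Mathlib

open MeasureTheory
open scoped RealInnerProductSpace

/-- With the orthonormal eigenbasis `𝐮_1, …, 𝐮_k` of `(Ker Λ^ν)^⊥` and the
corresponding eigenfunctions `u_j = λ_j^{-1/2} ∑ i, ν_i (𝐮_j)_i ρ_i` of `T_ν* T_ν`, for
`1 ≤ r ≤ k`, `b^ν ∈ ℝ^M`, the `r`-truncated solution
`𝐮^{(r)} = ∑_{i=1}^r λ_i^{-1} ⟨b^ν, 𝐮_i⟩ 𝐮_i` and `P_r` the orthogonal projection onto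
`span{u_1, …, u_r}`: every `u` with `T_ν* T_ν u = T_ν* b^ν` satisfies
`P_r u = ∑ j, ν_j (𝐮^{(r)})_j ρ_j`. -/
theorem truncated_svd_projection_formula {Γ : Type*} [MeasurableSpace Γ]
    (σ : Measure Γ)
    {M : ℕ} (hM : 1 ≤ M) (ρ : Fin M → Lp ℝ 2 σ) (ν : Fin M → ℝ)
    (hν : ∀ i, ν i ∈ Set.Ioo (0 : ℝ) 1) (hν2 : ∑ i, ν i ^ 2 = 1)
    (T : Lp ℝ 2 σ →L[ℝ] EuclideanSpace ℝ (Fin M))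
    (hT : ∀ (u : Lp ℝ 2 σ) (i : Fin M), T u i = ν i * ∫ x, u x * ρ i x ∂σ)
    (Λ : Matrix (Fin M) (Fin M) ℝ)
    (hΛ : ∀ i j, Λ i j = ν i * ν j * ∫ x, ρ i x * ρ j x ∂σ)
    (k : ℕ) (U : Fin k → EuclideanSpace ℝ (Fin M)) (lam : Fin k → ℝ)
    (hUorth : Orthonormal ℝ U)
    (hUspan : Submodule.span ℝ (Set.range U) = (LinearMap.ker (Matrix.toEuclideanLin Λ))ᗮ)
    (hUeig : ∀ j, Matrix.toEuclideanLin Λ (U j) = lam j • U j)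
    (hlam_pos : ∀ j, 0 < lam j)
    (hlam_mono : ∀ j j' : Fin k, j ≤ j' → lam j' ≤ lam j)
    (u : Fin k → Lp ℝ 2 σ)
    (hu : ∀ j, u j = (Real.sqrt (lam j))⁻¹ • ∑ i, (ν i * U j i) • ρ i)
    (r : ℕ) (hr : 1 ≤ r) (hrk : r ≤ k)
    (b : EuclideanSpace ℝ (Fin M))
    (uR : EuclideanSpace ℝ (Fin M))
    (huR : uR = ∑ i : Fin r,
      ((lam (Fin.castLE hrk i))⁻¹ * ⟪b, U (Fin.castLE hrk i)⟫) • U (Fin.castLE hrk i))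
    (S : Submodule ℝ (Lp ℝ 2 σ))
    (hS : S = Submodule.span ℝ (Set.range fun i : Fin r => u (Fin.castLE hrk i)))
    [Submodule.HasOrthogonalProjection S] :
    ∀ w : Lp ℝ 2 σ,
      ContinuousLinearMap.adjoint T (T w) = ContinuousLinearMap.adjoint T b →
        (Submodule.orthogonalProjectionOnto S w : Lp ℝ 2 σ) = ∑ j, (ν j * uR j) • ρ j := by
  intro w hw
  have hL2 : ∀ (f g : Lp ℝ 2 σ), ⟪f, g⟫ = ∫ x, f x * g x ∂σ := fun f g => by
    rw [MeasureTheory.L2.inner_def]; simp [RCLike.inner_apply]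
    congr 1; funext x; ring
  -- T in inner-product form
  have hT' : ∀ (v : Lp ℝ 2 σ) (i : Fin M), T v i = ν i * ⟪v, ρ i⟫ := fun v i => by
    rw [hT, hL2]
  -- adjoint formula
  have hadj : ∀ c : EuclideanSpace ℝ (Fin M),
      ContinuousLinearMap.adjoint T c = ∑ i, (ν i * c i) • ρ i := by
    intro c
    apply ext_inner_left ℝ
    intro v
    rw [ContinuousLinearMap.adjoint_inner_right, inner_sum]
    simp only [PiLp.inner_apply, RCLike.inner_apply, conj_trivial, inner_smul_right, hT']
    exact Finset.sum_congr rfl fun i _ => by ring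
  -- T ∘ adjoint T = Λ
  have hTT : ∀ c : EuclideanSpace ℝ (Fin M),
      T (ContinuousLinearMap.adjoint T c) = Matrix.toEuclideanLin Λ c := by
    intro c
    ext i
    rw [hadj, hT']
    have : Matrix.toEuclideanLin Λ c i = ∑ j, Λ i j * c j := by
      simp [Matrix.toEuclideanLin_apply, Matrix.mulVec, dotProduct]
    rw [this, sum_inner]
    simp only [real_inner_smul_left, hΛ, Finset.mul_sum]
    refine Finset.sum_congr rfl fun j _ => ?_
    rw [real_inner_comm, hL2]
    ring
  -- u j via adjoint
  have huT : ∀ j, u j = (Real.sqrt (lam j))⁻¹ • ContinuousLinearMap.adjoint T (U j) := by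
    intro j; rw [hu, hadj]
  have hs_pos : ∀ j, 0 < Real.sqrt (lam j) := fun j => Real.sqrt_pos.2 (hlam_pos j)
  have hadjU : ∀ j, ContinuousLinearMap.adjoint T (U j) = Real.sqrt (lam j) • u j := by
    intro j
    rw [huT, smul_smul, mul_inv_cancel₀ (hs_pos j).ne', one_smul]
  -- inner products of the u's
  have huu : ∀ i j, ⟪u i, u j⟫ = if i = j then (1:ℝ) else 0 := by
    intro i j
    rw [huT i, huT j, real_inner_smul_left, real_inner_smul_right,
      ContinuousLinearMap.adjoint_inner_left, hTT, hUeig, real_inner_smul_right,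
      orthonormal_iff_ite.1 hUorth]
    rcases eq_or_ne i j with rfl | hij
    · simp only [if_pos rfl, mul_one]
      rw [← Real.mul_self_sqrt (hlam_pos i).le]
      have := (Real.sqrt_pos.2 (hlam_pos i)).ne'
      field_simp
      rw [Real.sqrt_sq (hs_pos i).le]
    · simp [hij]
  -- key: ⟪U j, T w⟫ = ⟪U j, b⟫
  have hkey : ∀ j, ⟪U j, T w⟫ = ⟪U j, b⟫ := by
    intro j
    have h1 : lam j * ⟪U j, T w⟫ = lam j * ⟪U j, b⟫ := by
      calc lam j * ⟪U j, T w⟫ = ⟪lam j • U j, T w⟫ := (real_inner_smul_left _ _ _).symm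
        _ = ⟪T (ContinuousLinearMap.adjoint T (U j)), T w⟫ := by rw [hTT, hUeig]
        _ = ⟪ContinuousLinearMap.adjoint T (U j), ContinuousLinearMap.adjoint T (T w)⟫ := by
            rw [ContinuousLinearMap.adjoint_inner_right]
        _ = ⟪ContinuousLinearMap.adjoint T (U j), ContinuousLinearMap.adjoint T b⟫ := by rw [hw]
        _ = ⟪T (ContinuousLinearMap.adjoint T (U j)), b⟫ := by
            rw [ContinuousLinearMap.adjoint_inner_right]
        _ = ⟪lam j • U j, b⟫ := by rw [hTT, hUeig]
        _ = lam j * ⟪U j, b⟫ := real_inner_smul_left _ _ _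
    exact mul_left_cancel₀ (hlam_pos j).ne' h1
  -- inner of u j with w
  have huw : ∀ j, ⟪u j, w⟫ = (Real.sqrt (lam j))⁻¹ * ⟪U j, b⟫ := by
    intro j
    rw [huT, real_inner_smul_left, ContinuousLinearMap.adjoint_inner_left, hkey]
  -- define v
  set v : Lp ℝ 2 σ := ∑ i : Fin r,
    ((Real.sqrt (lam (Fin.castLE hrk i)))⁻¹ * ⟪b, U (Fin.castLE hrk i)⟫) • u (Fin.castLE hrk i)
    with hv
  -- RHS equals v
  have hRHS : ∑ j, (ν j * uR j) • ρ j = v := by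
    rw [← hadj, huR, map_sum]
    refine Finset.sum_congr rfl fun i _ => ?_
    rw [_root_.map_smul, hadjU, smul_smul]
    congr 1
    rw [mul_right_comm]
    congr 1
    rw [← Real.mul_self_sqrt (hlam_pos (Fin.castLE hrk i)).le]
    field_simp
    have := (hs_pos (Fin.castLE hrk i)).ne'
    rw [Real.sqrt_sq (hs_pos _).le]
    field_simp
  rw [hRHS]
  -- v ∈ S
  have hvS : v ∈ S := by
    rw [hS]
    exact Submodule.sum_mem _ fun i _ => Submodule.smul_mem _ _
      (Submodule.subset_span ⟨i, rfl⟩)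
  -- orthogonality with each generator
  have hgen : ∀ j : Fin r, ⟪w - v, u (Fin.castLE hrk j)⟫ = 0 := by
    intro j
    rw [inner_sub_left]
    have hvj : ⟪v, u (Fin.castLE hrk j)⟫
        = (Real.sqrt (lam (Fin.castLE hrk j)))⁻¹ * ⟪b, U (Fin.castLE hrk j)⟫ := by
      rw [hv, sum_inner]
      rw [Finset.sum_eq_single j]
      · rw [real_inner_smul_left, huu]
        simp
      · intro i _ hij
        rw [real_inner_smul_left, huu]
        have : Fin.castLE hrk i ≠ Fin.castLE hrk j := by
          simpa [Fin.ext_iff] using fun h => hij (Fin.ext h)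
        simp [this]
      · intro h; exact absurd (Finset.mem_univ j) h
    rw [hvj, real_inner_comm, huw, real_inner_comm b]
    ring
  refine Submodule.eq_starProjection_of_mem_of_inner_eq_zero hvS ?_
  intro z hz
  rw [hS] at hz
  induction hz using Submodule.span_induction with
  | mem x hx =>
      obtain ⟨i, rfl⟩ := hx
      exact hgen i
  | zero => exact inner_zero_right _
  | add x y _ _ hx hy => rw [inner_add_right, hx, hy, add_zero]
  | smul c x _ hx => rw [real_inner_smul_right, hx, mul_zero]
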